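/- Let G(p) be a directed formation in ℝ². Suppose that every vertex i has at most two outgoing edges, and whenever a vertex i has exactly two outgoing edges (i,k) and (i,ℓ), the bearings g_ik and g_iℓ are not collinear (i.e., g_iℓ is not a scalar multiple of g_ik). Then the formation is bearing persistent: Null(L_B) = Null(R_B). -/

import Mathlib

open scoped InnerProductSpace

/-- The orthogonal projection matrix `P_x = I − x xᵀ/‖x‖²` onto the orthogonal
complement of a nonzero vector `x ∈ ℝᵈ`, as a linear map. -/
noncomputable def projP {d : ℕ} (x : EuclideanSpace ℝ (Fin d)) :
    EuclideanSpace ℝ (Fin d) →ₗ[ℝ] EuclideanSpace ℝ (Fin d) :=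
  LinearMap.id - (‖x‖ ^ 2)⁻¹ • ((innerSL ℝ x).toLinearMap.smulRight x)

/-- The linear map sending a configuration `x = (x_1, …, x_n)` to `x_j − x_i`. -/
noncomputable def relpos {d n : ℕ} (i j : Fin n) :
    (Fin n → EuclideanSpace ℝ (Fin d)) →ₗ[ℝ] EuclideanSpace ℝ (Fin d) :=
  LinearMap.proj (R := ℝ) (φ := fun _ : Fin n => EuclideanSpace ℝ (Fin d)) j -
    LinearMap.proj (R := ℝ) (φ := fun _ : Fin n => EuclideanSpace ℝ (Fin d)) i

/-- The bearing `g_ij = (p_j − p_i)/‖p_j − p_i‖` of edge `(i, j)`. -/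
noncomputable def bearing {d n : ℕ} (p : Fin n → EuclideanSpace ℝ (Fin d))
    (i j : Fin n) : EuclideanSpace ℝ (Fin d) :=
  ‖p j - p i‖⁻¹ • (p j - p i)

/-- The bearing rigidity matrix `R_B` of the formation `G(p)`: the linear map
`ℝ^{dn} → ℝ^{d|E|}` whose component for edge `(i,j) ∈ E` is
`(1/‖e_ij‖) P_{g_ij} (x_j − x_i)`. -/
noncomputable def RB {d n : ℕ} (E : Finset (Fin n × Fin n))
    (p : Fin n → EuclideanSpace ℝ (Fin d)) :
    (Fin n → EuclideanSpace ℝ (Fin d)) →ₗ[ℝ] (↥E → EuclideanSpace ℝ (Fin d)) :=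
  LinearMap.pi fun e =>
    ‖p e.1.2 - p e.1.1‖⁻¹ • (projP (bearing p e.1.1 e.1.2) ∘ₗ relpos e.1.1 e.1.2)

/-- The bearing Laplacian `L_B` of the formation `G(p)`: the linear map
`ℝ^{dn} → ℝ^{dn}` whose `i`-th `ℝᵈ`-block is `∑_{j : (i,j) ∈ E} P_{g_ij}(x_i − x_j)`. -/
noncomputable def LB {d n : ℕ} (E : Finset (Fin n × Fin n))
    (p : Fin n → EuclideanSpace ℝ (Fin d)) :
    (Fin n → EuclideanSpace ℝ (Fin d)) →ₗ[ℝ] (Fin n → EuclideanSpace ℝ (Fin d)) :=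
  LinearMap.pi fun i =>
    ∑ j ∈ Finset.univ.filter (fun j => (i, j) ∈ E),
      (projP (bearing p i j) ∘ₗ relpos j i)

/-- The subspace `span{𝟏 ⊗ I_d, p} = {c • p + (v, …, v) : c ∈ ℝ, v ∈ ℝᵈ}` of
translations and scalings of the configuration `p`. -/
def transScale {d n : ℕ} (p : Fin n → EuclideanSpace ℝ (Fin d)) :
    Set (Fin n → EuclideanSpace ℝ (Fin d)) :=
  {x | ∃ (c : ℝ) (v : EuclideanSpace ℝ (Fin d)), x = c • p + fun _ => v}

/-!
`x ∈ Null(R_B)` iff `P_{g_ij}(x_i − x_j) = 0` for every edge, while `x ∈ Null(L_B)` iff for every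
vertex the sum of these vectors over its outgoing edges vanishes. The summand of edge `(i, j)` is
orthogonal to `g_ij`. With one outgoing edge the sum is that summand; with two outgoing edges of
non-collinear bearings `g, h` the summands `u, −u` are orthogonal to both `g` and `h`, which span
`ℝ²`, so `u = 0`.
-/

open Finset

lemma inner_projP_eq_zero {d : ℕ} {x : EuclideanSpace ℝ (Fin d)} (hx : x ≠ 0)
    (y : EuclideanSpace ℝ (Fin d)) : ⟪x, projP x y⟫_ℝ = 0 := by
  have hnx : ‖x‖ ^ 2 ≠ 0 := pow_ne_zero 2 (norm_ne_zero_iff.mpr hx)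
  simp only [projP, LinearMap.sub_apply, LinearMap.id_apply, LinearMap.smul_apply,
    LinearMap.smulRight_apply, ContinuousLinearMap.coe_coe, innerSL_apply_apply,
    inner_sub_right, real_inner_smul_right, real_inner_self_eq_norm_sq]
  field_simp
  ring

lemma bearing_ne_zero {d n : ℕ} (p : Fin n → EuclideanSpace ℝ (Fin d)) {i j : Fin n}
    (h : p i ≠ p j) : bearing p i j ≠ 0 := by
  have hs : p j - p i ≠ 0 := sub_ne_zero.mpr h.symm
  exact smul_ne_zero (inv_ne_zero (norm_ne_zero_iff.mpr hs)) hs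

section Plane

variable {V : Type*} [NormedAddCommGroup V] [InnerProductSpace ℝ V]

lemma span_pair_eq_top_of_not_collinear (hV : Module.finrank ℝ V = 2) {g h : V} (hg : g ≠ 0)
    (hgh : ¬∃ c : ℝ, h = c • g) : Submodule.span ℝ {g, h} = ⊤ := by
  have hli : LinearIndependent ℝ ![h, g] :=
    linearIndependent_fin2.mpr ⟨hg, fun c hc => hgh ⟨c, hc.symm⟩⟩
  simpa [Matrix.range_cons, Set.pair_comm] using
    hli.span_eq_top_of_card_eq_finrank (by simp [hV])

lemma eq_zero_of_inner_eq_zero_of_not_collinear (hV : Module.finrank ℝ V = 2) {g h u : V}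
    (hg : g ≠ 0) (hgh : ¬∃ c : ℝ, h = c • g) (hgu : ⟪g, u⟫_ℝ = 0) (hhu : ⟪h, u⟫_ℝ = 0) :
    u = 0 := by
  obtain ⟨a, b, hab⟩ := Submodule.mem_span_pair.mp
    ((span_pair_eq_top_of_not_collinear hV hg hgh).symm ▸ Submodule.mem_top (x := u))
  rw [← inner_self_eq_zero (𝕜 := ℝ)]
  calc ⟪u, u⟫_ℝ = a * ⟪g, u⟫_ℝ + b * ⟪h, u⟫_ℝ := by
        rw [← real_inner_smul_left, ← real_inner_smul_left, ← inner_add_left, hab]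
    _ = 0 := by rw [hgu, hhu, mul_zero, mul_zero, add_zero]

lemma eq_zero_of_sum_eq_zero_of_inner_eq_zero (hV : Module.finrank ℝ V = 2) {ι : Type*}
    {s : Finset ι} (hs : #s ≤ 2) {g u : ι → V} (hg : ∀ j ∈ s, g j ≠ 0)
    (hnc : ∀ j ∈ s, ∀ k ∈ s, j ≠ k → ¬∃ c : ℝ, g k = c • g j)
    (hgu : ∀ j ∈ s, ⟪g j, u j⟫_ℝ = 0) (hsum : ∑ j ∈ s, u j = 0) {j : ι} (hj : j ∈ s) :
    u j = 0 := by
  classical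
  have hrest : #(s.erase j) ≤ 1 := by rw [card_erase_of_mem hj]; omega
  rw [← insert_erase hj, sum_insert (notMem_erase j s)] at hsum
  obtain hempty | ⟨k, hk⟩ := (s.erase j).eq_empty_or_nonempty
  · simpa [hempty] using hsum
  have hsk : s.erase j = {k} :=
    eq_singleton_iff_unique_mem.mpr ⟨hk, fun a ha => card_le_one.mp hrest a ha k hk⟩
  rw [hsk, sum_singleton, add_eq_zero_iff_eq_neg] at hsum
  obtain ⟨hkj, hks⟩ := mem_erase.mp hk
  refine eq_zero_of_inner_eq_zero_of_not_collinear hV (hg j hj) (hnc j hj k hks hkj.symm)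
    (hgu j hj) ?_
  rw [hsum, inner_neg_right, hgu k hks, neg_zero]

end Plane

section Formation

variable {d n : ℕ} {E : Finset (Fin n × Fin n)} {p : Fin n → EuclideanSpace ℝ (Fin d)}

lemma LB_apply (x : Fin n → EuclideanSpace ℝ (Fin d)) (i : Fin n) :
    LB E p x i = ∑ j ∈ univ.filter (fun j => (i, j) ∈ E), projP (bearing p i j) (x i - x j) := by
  simp [LB, relpos]

lemma mem_ker_RB_iff (hsep : ∀ e ∈ E, p e.1 ≠ p e.2) {x : Fin n → EuclideanSpace ℝ (Fin d)} :
    x ∈ LinearMap.ker (RB E p) ↔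
      ∀ i j, (i, j) ∈ E → projP (bearing p i j) (x i - x j) = 0 := by
  have hnorm : ∀ e ∈ E, ‖p e.2 - p e.1‖⁻¹ ≠ 0 := fun e he =>
    inv_ne_zero (norm_ne_zero_iff.mpr (sub_ne_zero.mpr (hsep e he).symm))
  simp only [LinearMap.mem_ker, funext_iff, RB, relpos, LinearMap.pi_apply,
    LinearMap.smul_apply, LinearMap.comp_apply, LinearMap.sub_apply, LinearMap.proj_apply,
    Pi.zero_apply, Subtype.forall, Prod.forall]
  refine forall₂_congr fun i j => forall_congr' fun hij => ?_
  rw [smul_eq_zero_iff_right (hnorm _ hij), ← neg_sub, map_neg, neg_eq_zero]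

lemma ker_RB_le_ker_LB (hsep : ∀ e ∈ E, p e.1 ≠ p e.2) :
    LinearMap.ker (RB E p) ≤ LinearMap.ker (LB E p) := fun x hx => by
  rw [mem_ker_RB_iff hsep] at hx
  ext1 i
  rw [LB_apply]
  exact sum_eq_zero fun j hj => hx i j (mem_filter.mp hj).2

lemma card_filter_mem_le (E : Finset (Fin n × Fin n)) (i : Fin n) :
    #(univ.filter fun j => (i, j) ∈ E) ≤ #(E.filter fun e => e.1 = i) :=
  card_le_card_of_injOn (fun j => (i, j)) (fun j hj => by simpa using hj)
    (fun _ _ _ _ h => (Prod.mk.inj h).2)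

end Formation

lemma ker_LB_le_ker_RB_of_two_outgoing {n : ℕ} {E : Finset (Fin n × Fin n)}
    {p : Fin n → EuclideanSpace ℝ (Fin 2)} (hsep : ∀ e ∈ E, p e.1 ≠ p e.2)
    (hout : ∀ i : Fin n, #(E.filter fun e => e.1 = i) ≤ 2)
    (hnc : ∀ i k l : Fin n, (i, k) ∈ E → (i, l) ∈ E → k ≠ l →
      ¬∃ c : ℝ, bearing p i l = c • bearing p i k) :
    LinearMap.ker (LB E p) ≤ LinearMap.ker (RB E p) := fun x hx => by
  rw [mem_ker_RB_iff hsep]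
  intro i j hij
  have hsum := congrFun (LinearMap.mem_ker.mp hx) i
  rw [LB_apply] at hsum
  have hg : ∀ k ∈ univ.filter (fun k => (i, k) ∈ E), bearing p i k ≠ 0 :=
    fun k hk => bearing_ne_zero p (hsep _ (mem_filter.mp hk).2)
  exact eq_zero_of_sum_eq_zero_of_inner_eq_zero finrank_euclideanSpace_fin
    ((card_filter_mem_le E i).trans (hout i)) hg
    (fun k hk l hl => hnc i k l (mem_filter.mp hk).2 (mem_filter.mp hl).2)
    (fun k hk => inner_projP_eq_zero (hg k hk) _) hsum (by simpa using hij)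

theorem stmt13_general {n : ℕ}
    (E : Finset (Fin n × Fin n)) (p : Fin n → EuclideanSpace ℝ (Fin 2))
    (hsep : ∀ e ∈ E, p e.1 ≠ p e.2)
    (hout : ∀ i : Fin n, (E.filter (fun e => e.1 = i)).card ≤ 2)
    (hnc : ∀ i k l : Fin n, (i, k) ∈ E → (i, l) ∈ E → k ≠ l →
      ¬∃ c : ℝ, bearing p i l = c • bearing p i k) :
    LinearMap.ker (LB E p) = LinearMap.ker (RB E p) :=
  le_antisymm (ker_LB_le_ker_RB_of_two_outgoing hsep hout hnc) (ker_RB_le_ker_LB hsep)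

/-- Sufficient condition for bearing persistence in `ℝ²`: if every vertex has at
most two outgoing edges, and whenever a vertex has two distinct outgoing edges
their bearings are not collinear, then `Null(L_B) = Null(R_B)`. -/
theorem stmt13 {n : ℕ} (hn : 2 ≤ n)
    (E : Finset (Fin n × Fin n)) (p : Fin n → EuclideanSpace ℝ (Fin 2))
    (hloop : ∀ e ∈ E, e.1 ≠ e.2) (hsep : ∀ e ∈ E, p e.1 ≠ p e.2)
    (hout : ∀ i : Fin n, (E.filter (fun e => e.1 = i)).card ≤ 2)
    (hnc : ∀ i k l : Fin n, (i, k) ∈ E → (i, l) ∈ E → k ≠ l →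
      ¬∃ c : ℝ, bearing p i l = c • bearing p i k) :
    LinearMap.ker (LB E p) = LinearMap.ker (RB E p) :=
  stmt13_general E p hsep hout hnc
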